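/- Unbiasedness of the two-sample aleatoric estimator: if θ_A and θ_B are independent random variables with the same distribution as θ, then E_{θ_A,θ_B}[Cov_i(y_i(θ_A), y_i(θ_B))] = Var_i(E_θ[y_i(θ)]), where Cov_i(u_i, v_i) := (1/N)Σ_j (u_j − E_i[u_i])(v_j − E_i[v_i]). -/

import Mathlib

open MeasureTheory ProbabilityTheory

/-- Empirical mean over the uniform distribution on `Fin N`. -/
noncomputable def empMean {N : ℕ} (v : Fin N → ℝ) : ℝ := (∑ i, v i) / N

/-- Empirical covariance over the uniform distribution on `Fin N`. -/
noncomputable def empCov {N : ℕ} (u v : Fin N → ℝ) : ℝ :=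
  (∑ j, (u j - empMean u) * (v j - empMean v)) / N

/-- Empirical variance over the uniform distribution on `Fin N`. -/
noncomputable def empVar {N : ℕ} (v : Fin N → ℝ) : ℝ := empCov v v

/-! The empirical covariance is the empirical mean of the product of the centred vectors, and
centring is linear, so the expectation passes inside `empMean`; on each coordinate independence
factors the expectation of the product. The two-sample statement is the special case of two
independent vectors with the same mean `fun i => ∫ θ, y i θ ∂μ`. -/

section EmpiricalMoments

variable {Ω : Type*} [MeasurableSpace Ω] {P : Measure Ω} {N : ℕ} {U V : Ω → Fin N → ℝ}

lemma empCov_eq_empMean (u v : Fin N → ℝ) :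
    empCov u v = empMean fun j => (u j - empMean u) * (v j - empMean v) := rfl

lemma measurable_empMean : Measurable (empMean : (Fin N → ℝ) → ℝ) := by
  unfold empMean
  fun_prop

lemma integrable_empMean (hU : ∀ i, Integrable (fun ω => U ω i) P) :
    Integrable (fun ω => empMean (U ω)) P :=
  (integrable_finsetSum _ fun i _ => hU i).div_const _

lemma integral_empMean (hU : ∀ i, Integrable (fun ω => U ω i) P) :
    ∫ ω, empMean (U ω) ∂P = empMean fun i => ∫ ω, U ω i ∂P := by
  simp only [empMean]
  rw [integral_div, integral_finsetSum _ fun i _ => hU i]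

lemma integral_sub_empMean (hU : ∀ i, Integrable (fun ω => U ω i) P) (j : Fin N) :
    ∫ ω, (U ω j - empMean (U ω)) ∂P = (∫ ω, U ω j ∂P) - empMean fun i => ∫ ω, U ω i ∂P := by
  rw [integral_sub (hU j) (integrable_empMean hU), integral_empMean hU]

lemma ProbabilityTheory.IndepFun.integral_empCov (hUV : IndepFun U V P)
    (hU : ∀ i, Integrable (fun ω => U ω i) P) (hV : ∀ i, Integrable (fun ω => V ω i) P) :
    ∫ ω, empCov (U ω) (V ω) ∂P =
      empCov (fun i => ∫ ω, U ω i ∂P) (fun i => ∫ ω, V ω i ∂P) := by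
  have hind (j : Fin N) :
      IndepFun (fun ω => U ω j - empMean (U ω)) (fun ω => V ω j - empMean (V ω)) P :=
    hUV.comp ((measurable_pi_apply j).sub measurable_empMean)
      ((measurable_pi_apply j).sub measurable_empMean)
  have hcU (j : Fin N) : Integrable (fun ω => U ω j - empMean (U ω)) P :=
    (hU j).sub (integrable_empMean hU)
  have hcV (j : Fin N) : Integrable (fun ω => V ω j - empMean (V ω)) P :=
    (hV j).sub (integrable_empMean hV)
  simp only [empCov_eq_empMean]
  rw [integral_empMean (U := fun ω j => (U ω j - empMean (U ω)) * (V ω j - empMean (V ω)))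
    fun j => (hind j).integrable_mul (hcU j) (hcV j)]
  congr 1
  ext j
  rw [← integral_sub_empMean hU, ← integral_sub_empMean hV]
  exact (hind j).integral_mul_eq_mul_integral (hcU j).aestronglyMeasurable
    (hcV j).aestronglyMeasurable

end EmpiricalMoments

theorem aleatoric_estimator_unbiased_general
    {Ω Θ : Type*} [MeasurableSpace Ω] [MeasurableSpace Θ]
    (P : Measure Ω)
    (μ : Measure Θ) [IsProbabilityMeasure μ]
    (θA θB : Ω → Θ) (hθA : Measurable θA) (hθB : Measurable θB)
    (hindep : IndepFun θA θB P)
    (hlawA : Measure.map θA P = μ) (hlawB : Measure.map θB P = μ)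
    (N : ℕ) (y : Fin N → Θ → ℝ)
    (hmeas : ∀ i, Measurable (y i)) (hL2 : ∀ i, MemLp (y i) 2 μ) :
    ∫ ω, empCov (fun i => y i (θA ω)) (fun i => y i (θB ω)) ∂P =
      empVar (fun i => ∫ θ, y i θ ∂μ) := by
  have hy : Measurable fun θ i => y i θ := measurable_pi_lambda _ hmeas
  have hyint (i : Fin N) : Integrable (y i) μ := (hL2 i).integrable one_le_two
  have hmean {θX : Ω → Θ} (hθX : Measurable θX) (hlaw : Measure.map θX P = μ) (i : Fin N) :
      ∫ ω, y i (θX ω) ∂P = ∫ θ, y i θ ∂μ := by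
    rw [← hlaw, integral_map_of_stronglyMeasurable hθX (hmeas i).stronglyMeasurable]
  have hint {θX : Ω → Θ} (hθX : Measurable θX) (hlaw : Measure.map θX P = μ) (i : Fin N) :
      Integrable (fun ω => y i (θX ω)) P :=
    MeasurePreserving.integrable_comp_of_integrable ⟨hθX, hlaw⟩ (hyint i)
  rw [(hindep.comp hy hy).integral_empCov (U := fun ω i => y i (θA ω)) (V := fun ω i => y i (θB ω))
    (hint hθA hlawA) (hint hθB hlawB)]
  simp only [hmean hθA hlawA, hmean hθB hlawB]
  rfl

/-- Unbiasedness of the two-sample aleatoric estimator: if `θ_A` and `θ_B` are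
independent random variables each distributed according to the posterior `μ`, then
`E_{θ_A,θ_B}[Cov_i(y_i(θ_A), y_i(θ_B))] = Var_i(E_θ[y_i(θ)])`. -/
theorem aleatoric_estimator_unbiased
    {Ω Θ : Type*} [MeasurableSpace Ω] [MeasurableSpace Θ]
    (P : Measure Ω) [IsProbabilityMeasure P]
    (μ : Measure Θ) [IsProbabilityMeasure μ]
    (θA θB : Ω → Θ) (hθA : Measurable θA) (hθB : Measurable θB)
    (hindep : IndepFun θA θB P)
    (hlawA : Measure.map θA P = μ) (hlawB : Measure.map θB P = μ)
    (N : ℕ) (hN : 0 < N) (y : Fin N → Θ → ℝ)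
    (hmeas : ∀ i, Measurable (y i)) (hL2 : ∀ i, MemLp (y i) 2 μ) :
    ∫ ω, empCov (fun i => y i (θA ω)) (fun i => y i (θB ω)) ∂P =
      empVar (fun i => ∫ θ, y i θ ∂μ) :=
  aleatoric_estimator_unbiased_general P μ θA θB hθA hθB hindep hlawA hlawB N y hmeas hL2
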